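/- Let k ≥ 2 be an integer and let l, m, n be positive integers with 1 ≤ m ≤ n and n ≥ k + 2. If C_l = F^{(k)}_n · F^{(k)}_m, then l < 0.8 n − 0.4. -/
import Mathlib

def lucasBalancing : ℕ → ℤ
  | 0 => 1
  | 1 => 3
  | j + 2 => 6 * lucasBalancing (j + 1) - lucasBalancing j

lemma lb_rec (j : ℕ) :
    lucasBalancing (j + 2) = 6 * lucasBalancing (j + 1) - lucasBalancing j := rfl

lemma lb_pos_mono : ∀ j : ℕ, 1 ≤ lucasBalancing j ∧ lucasBalancing j ≤ lucasBalancing (j + 1) := by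
  intro j
  induction j with
  | zero => norm_num [lucasBalancing]
  | succ j ih =>
    obtain ⟨h1, h2⟩ := ih
    refine ⟨by linarith, ?_⟩
    rw [lb_rec]
    linarith

lemma lb5 (j : ℕ) : 5 * lucasBalancing (j + 1) ≤ lucasBalancing (j + 2) := by
  rw [lb_rec]
  linarith [(lb_pos_mono j).2]

lemma lb29 : ∀ j : ℕ, (29 : ℤ) ^ (j + 2) ≤ 2 * 5 ^ (j + 2) * lucasBalancing (j + 2) := by
  intro j
  induction j with
  | zero => norm_num [lb_rec, lucasBalancing]
  | succ j ih =>
    have h5' := lb5 j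
    have hrec := lb_rec (j + 1)
    have key : 29 * lucasBalancing (j + 2) ≤ 5 * lucasBalancing (j + 3) := by
      rw [hrec]; linarith
    have hp : (0 : ℤ) < 5 ^ (j + 2) := by positivity
    have h2 := mul_le_mul_of_nonneg_left key (show (0:ℤ) ≤ 2 * 5 ^ (j + 2) by positivity)
    calc (29 : ℤ) ^ (j + 3) = 29 * 29 ^ (j + 2) := by ring
      _ ≤ 29 * (2 * 5 ^ (j + 2) * lucasBalancing (j + 2)) := by linarith
      _ = 2 * 5 ^ (j + 2) * (29 * lucasBalancing (j + 2)) := by ring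
      _ ≤ 2 * 5 ^ (j + 2) * (5 * lucasBalancing (j + 3)) := h2
      _ = 2 * 5 ^ (j + 3) * lucasBalancing (j + 3) := by ring

lemma Fid (k : ℕ) (hk : 2 ≤ k) (F : ℤ → ℤ)
    (hFrec : ∀ j : ℤ, 2 ≤ j → F j = ∑ i ∈ Finset.range k, F (j - 1 - (i : ℤ)))
    (j : ℤ) (hj : 2 ≤ j) : F (j + 1) = 2 * F j - F (j - k) := by
  obtain ⟨k', rfl⟩ : ∃ k', k = k' + 1 := ⟨k - 1, by omega⟩
  have h1 := hFrec (j + 1) (by omega)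
  have h2 := hFrec j hj
  rw [Finset.sum_range_succ'] at h1
  rw [Finset.sum_range_succ] at h2
  have e0 : F (j + 1 - 1 - ((0 : ℕ) : ℤ)) = F j := by norm_num
  have ec : ∀ i ∈ Finset.range k', F (j + 1 - 1 - ((i + 1 : ℕ) : ℤ)) = F (j - 1 - (i : ℤ)) := by
    intro i _
    congr 1
    push_cast
    ring
  rw [Finset.sum_congr rfl ec, e0] at h1
  have el : F (j - 1 - ((k' : ℕ) : ℤ)) = F (j - ((k' + 1 : ℕ) : ℤ)) := by
    congr 1
    push_cast
    ring
  rw [el] at h2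
  linarith

lemma F2val (k : ℕ) (hk : 2 ≤ k) (F : ℤ → ℤ)
    (hF0 : ∀ j : ℤ, -((k : ℤ) - 2) ≤ j → j ≤ 0 → F j = 0)
    (hF1 : F 1 = 1)
    (hFrec : ∀ j : ℤ, 2 ≤ j → F j = ∑ i ∈ Finset.range k, F (j - 1 - (i : ℤ))) :
    F 2 = 1 := by
  obtain ⟨k', rfl⟩ : ∃ k', k = k' + 1 := ⟨k - 1, by omega⟩
  have h := hFrec 2 le_rfl
  rw [Finset.sum_range_succ'] at h
  have e0 : F ((2 : ℤ) - 1 - ((0 : ℕ) : ℤ)) = 1 := by norm_num [hF1]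
  have ec : ∀ i ∈ Finset.range k', F ((2 : ℤ) - 1 - ((i + 1 : ℕ) : ℤ)) = 0 := by
    intro i hi
    simp only [Finset.mem_range] at hi
    apply hF0 <;> push_cast <;> omega
  rw [Finset.sum_congr rfl ec, e0, Finset.sum_const_zero] at h
  simpa using h

lemma Fprop (k : ℕ) (hk : 2 ≤ k) (F : ℤ → ℤ)
    (hF0 : ∀ j : ℤ, -((k : ℤ) - 2) ≤ j → j ≤ 0 → F j = 0)
    (hF1 : F 1 = 1)
    (hFrec : ∀ j : ℤ, 2 ≤ j → F j = ∑ i ∈ Finset.range k, F (j - 1 - (i : ℤ))) :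
    ∀ j : ℕ, 1 ≤ j →
      1 ≤ F j ∧ (∀ i : ℕ, 1 ≤ i → i ≤ j → F (i : ℤ) ≤ F (j : ℤ)) ∧
        F ((j : ℤ) + 1) ≤ 2 * F (j : ℤ) := by
  have hF2 : F 2 = 1 := F2val k hk F hF0 hF1 hFrec
  intro j
  induction j using Nat.strong_induction_on with
  | _ j ih =>
    intro hj
    rcases eq_or_lt_of_le hj with h1 | h1
    · obtain rfl : j = 1 := h1.symm
      have e1 : ((1 : ℕ) : ℤ) = 1 := by norm_num
      refine ⟨by rw [e1, hF1], ?_, ?_⟩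
      · intro i hi1 hi2
        obtain rfl : i = 1 := le_antisymm hi2 hi1
        exact le_refl _
      · rw [e1, hF1]
        have : (1 : ℤ) + 1 = 2 := by norm_num
        rw [this, hF2]
        norm_num
    · rcases eq_or_lt_of_le (show 2 ≤ j by omega) with h2 | h2
      · obtain rfl : j = 2 := h2.symm
        have e2 : ((2 : ℕ) : ℤ) = 2 := by norm_num
        have hB := Fid k hk F hFrec 2 le_rfl
        have hz : F (2 - (k : ℤ)) = 0 := hF0 _ (by omega) (by omega)
        refine ⟨by rw [e2, hF2], ?_, ?_⟩
        · intro i hi1 hi2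
          interval_cases i
          · rw [e2, hF2]
            have : ((1 : ℕ) : ℤ) = 1 := by norm_num
            rw [this, hF1]
          · exact le_refl _
        · rw [e2]
          have : (2 : ℤ) + 1 = 3 := by norm_num
          rw [hF2, hz] at hB
          linarith [hB]
      · -- j ≥ 3
        obtain ⟨Hp, Hmono, _⟩ := ih (j - 1) (by omega) (by omega)
        have ej : ((j - 1 : ℕ) : ℤ) = (j : ℤ) - 1 := by omega
        rw [ej] at Hp Hmono
        have hA := Fid k hk F hFrec ((j : ℤ) - 1) (by omega)
        rw [sub_add_cancel] at hA
        -- hA : F ↑j = 2 * F (↑j - 1) - F (↑j - 1 - ↑k)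
        have hX : 0 ≤ F ((j : ℤ) - 1 - k) ∧ F ((j : ℤ) - 1 - k) ≤ F ((j : ℤ) - 1) := by
          by_cases hc : (j : ℤ) - 1 - (k : ℤ) ≤ 0
          · have hz : F ((j : ℤ) - 1 - k) = 0 := hF0 _ (by omega) hc
            rw [hz]
            exact ⟨le_refl 0, by linarith⟩
          · push_neg at hc
            have h1t : 1 ≤ j - 1 - k := by omega
            have et : (((j - 1 - k : ℕ)) : ℤ) = (j : ℤ) - 1 - (k : ℤ) := by omega
            have hmt := Hmono (j - 1 - k) h1t (by omega)
            have hpt := (ih (j - 1 - k) (by omega) h1t).1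
            rw [et] at hmt hpt
            exact ⟨by linarith, hmt⟩
        have hFj1 : F ((j : ℤ) - 1) ≤ F (j : ℤ) := by linarith [hX.1, hX.2]
        have hFjpos : 1 ≤ F (j : ℤ) := by linarith
        refine ⟨hFjpos, ?_, ?_⟩
        · intro i hi1 hi2
          rcases eq_or_lt_of_le hi2 with rfl | hi3
          · exact le_refl _
          · exact le_trans (Hmono i hi1 (by omega)) hFj1
        · have hB := Fid k hk F hFrec (j : ℤ) (by omega)
          have hY : 0 ≤ F ((j : ℤ) - k) := by
            by_cases hc : (j : ℤ) - (k : ℤ) ≤ 0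
            · have hz : F ((j : ℤ) - k) = 0 := hF0 _ (by omega) hc
              rw [hz]
            · push_neg at hc
              have h1t : 1 ≤ j - k := by omega
              have et : (((j - k : ℕ)) : ℤ) = (j : ℤ) - (k : ℤ) := by omega
              have hpt := (ih (j - k) (by omega) h1t).1
              rw [et] at hpt
              linarith
          linarith [hB]

lemma Fbound (k : ℕ) (hk : 2 ≤ k) (F : ℤ → ℤ)
    (hF0 : ∀ j : ℤ, -((k : ℤ) - 2) ≤ j → j ≤ 0 → F j = 0)
    (hF1 : F 1 = 1)
    (hFrec : ∀ j : ℤ, 2 ≤ j → F j = ∑ i ∈ Finset.range k, F (j - 1 - (i : ℤ))) :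
    ∀ j : ℕ, 1 ≤ j → F (j : ℤ) ≤ 2 ^ (j - 1) := by
  intro j hj
  induction j, hj using Nat.le_induction with
  | base => simpa using hF1.le
  | succ j hj ih =>
    have h3 := (Fprop k hk F hF0 hF1 hFrec j hj).2.2
    have e : ((j + 1 : ℕ) : ℤ) = (j : ℤ) + 1 := by push_cast; ring
    rw [e]
    calc F ((j : ℤ) + 1) ≤ 2 * F (j : ℤ) := h3
      _ ≤ 2 * 2 ^ (j - 1) := by linarith
      _ = 2 ^ (j + 1 - 1) := by
          rw [← pow_succ']
          congr 1
          omega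

theorem stmt11 (k : ℕ) (hk : 2 ≤ k)
    (F : ℤ → ℤ)
    (hF0 : ∀ j : ℤ, -((k : ℤ) - 2) ≤ j → j ≤ 0 → F j = 0)
    (hF1 : F 1 = 1)
    (hFrec : ∀ j : ℤ, 2 ≤ j → F j = ∑ i ∈ Finset.range k, F (j - 1 - (i : ℤ)))
    (l m n : ℕ) (hl : 1 ≤ l) (hm : 1 ≤ m) (hmn : m ≤ n) (hn : k + 2 ≤ n)
    (h : lucasBalancing l = F n * F m) :
    (l : ℝ) < 0.8 * n - 0.4 := by
  by_contra hcon
  push_neg at hcon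
  have hnl : 4 * n ≤ 5 * l + 2 := by
    have h4 : (4 : ℝ) * (n : ℝ) ≤ 5 * (l : ℝ) + 2 := by norm_num at hcon; linarith
    exact_mod_cast h4
  have hl3 : 3 ≤ l := by omega
  have h29 : (29 : ℤ) ^ l ≤ 2 * 5 ^ l * lucasBalancing l := by
    obtain ⟨j, rfl⟩ : ∃ j, l = j + 2 := ⟨l - 2, by omega⟩
    exact lb29 j
  have hFn1 : 1 ≤ F n := (Fprop k hk F hF0 hF1 hFrec n (by omega)).1
  have hFm1 : 1 ≤ F m := (Fprop k hk F hF0 hF1 hFrec m hm).1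
  have hFnb : F n ≤ 2 ^ (n - 1) := Fbound k hk F hF0 hF1 hFrec n (by omega)
  have hFmb : F m ≤ 2 ^ (m - 1) := Fbound k hk F hF0 hF1 hFrec m hm
  have hprod : F n * F m ≤ 2 ^ (n - 1) * 2 ^ (m - 1) :=
    mul_le_mul hFnb hFmb (by linarith) (by positivity)
  have hpp : (2 : ℤ) ^ (n - 1) * 2 ^ (m - 1) = 2 ^ (n + m - 2) := by
    rw [← pow_add]; congr 1; omega
  have hmono : (2 : ℤ) ^ (n + m - 2) ≤ 2 ^ (2 * n - 2) :=
    pow_le_pow_right₀ (by norm_num) (by omega)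
  have hprod2 : F n * F m ≤ 2 ^ (2 * n - 2) := by
    rw [hpp] at hprod; linarith
  have h5 : (29 : ℤ) ^ l ≤ 5 ^ l * 2 ^ (2 * n - 1) := by
    have hmul := mul_le_mul_of_nonneg_left hprod2 (show (0:ℤ) ≤ 2 * 5 ^ l by positivity)
    have e21 : (2 : ℤ) * 5 ^ l * 2 ^ (2 * n - 2) = 5 ^ l * 2 ^ (2 * n - 1) := by
      have : (2 : ℤ) ^ (2 * n - 1) = 2 ^ (2 * n - 2) * 2 := by
        rw [← pow_succ]; congr 1; omega
      rw [this]; ring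
    rw [h] at h29
    linarith [h29, hmul, e21.le, e21.ge]
  have hnn : (0 : ℤ) ≤ 29 ^ l := by positivity
  have hsq : (29 : ℤ) ^ l * 29 ^ l ≤ (5 ^ l * 2 ^ (2 * n - 1)) * (5 ^ l * 2 ^ (2 * n - 1)) :=
    mul_le_mul h5 h5 hnn (by positivity)
  have e1 : (29 : ℤ) ^ l * 29 ^ l = 841 ^ l := by rw [← mul_pow]; norm_num
  have e2 : ((5 : ℤ) ^ l * 2 ^ (2 * n - 1)) * (5 ^ l * 2 ^ (2 * n - 1))
      = 25 ^ l * 2 ^ (4 * n - 2) := by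
    have a : (5 : ℤ) ^ l * 5 ^ l = 25 ^ l := by rw [← mul_pow]; norm_num
    have b : (2 : ℤ) ^ (2 * n - 1) * 2 ^ (2 * n - 1) = 2 ^ (4 * n - 2) := by
      rw [← pow_add]; congr 1; omega
    calc ((5 : ℤ) ^ l * 2 ^ (2 * n - 1)) * (5 ^ l * 2 ^ (2 * n - 1))
        = (5 ^ l * 5 ^ l) * (2 ^ (2 * n - 1) * 2 ^ (2 * n - 1)) := by ring
      _ = 25 ^ l * 2 ^ (4 * n - 2) := by rw [a, b]
  have e3 : (2 : ℤ) ^ (4 * n - 2) ≤ 2 ^ (5 * l) :=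
    pow_le_pow_right₀ (by norm_num) (by omega)
  have e4 : (25 : ℤ) ^ l * 2 ^ (5 * l) = 800 ^ l := by
    rw [pow_mul, ← mul_pow]; norm_num
  have hfin : (841 : ℤ) ^ l ≤ 800 ^ l := by
    rw [← e1, ← e4]
    calc (29 : ℤ) ^ l * 29 ^ l ≤ (5 ^ l * 2 ^ (2 * n - 1)) * (5 ^ l * 2 ^ (2 * n - 1)) := hsq
      _ = 25 ^ l * 2 ^ (4 * n - 2) := e2
      _ ≤ 25 ^ l * 2 ^ (5 * l) := by
          apply mul_le_mul_of_nonneg_left e3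
          positivity
  have hlt : (800 : ℤ) ^ l < 841 ^ l :=
    pow_lt_pow_left₀ (by norm_num) (by norm_num) (by omega)
  linarith
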